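/- Let P : C^op → InfSL be a variational first order doctrine on a category C with distributive binary coproducts. Then for all objects A, B, the fibered equality on the coproduct decomposes as δ_{A+B} = ∃_{i_A×i_A}(δ_A) ∨ ∃_{i_B×i_B}(δ_B), where i_A, i_B are the coproduct injections. -/

import Mathlib

open CategoryTheory CategoryTheory.Limits Opposite

noncomputable section

universe w v u

namespace DoctrinePaper

variable {C : Type u} [Category.{v} C] [HasFiniteProducts C]

/-- The fiber of a primary doctrine `P : Cᵒᵖ ⥤ SemilatInfCat` over an object `A`. -/
abbrev Fib (P : Cᵒᵖ ⥤ SemilatInfCat.{w}) (A : C) : Type w :=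
  ↥(P.obj (op A))

/-- Reindexing along an arrow `f : A ⟶ B`. -/
def rmap (P : Cᵒᵖ ⥤ SemilatInfCat.{w}) {A B : C} (f : A ⟶ B) :
    Fib P B → Fib P A :=
  fun x => (P.map f.op) x

variable (P : Cᵒᵖ ⥤ SemilatInfCat.{w})

/-- An elementary doctrine: fibered equalities `δ A ∈ P (A ⨯ A)` such that
`E_e(α) = P⟨pr1,pr2⟩(α) ⊓ P⟨pr2,pr3⟩(δ A)` is left adjoint to reindexing along
`e = ⟨pr1,pr2,pr2⟩ : X ⨯ A ⟶ (X ⨯ A) ⨯ A`. -/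
structure IsElementary where
  δ : ∀ A : C, Fib P (A ⨯ A)
  adj :
    ∀ (X A : C) (α : Fib P (X ⨯ A)) (β : Fib P ((X ⨯ A) ⨯ A)),
      (rmap P (prod.fst : (X ⨯ A) ⨯ A ⟶ X ⨯ A) α ⊓
          rmap P (prod.lift (prod.fst ≫ prod.snd) prod.snd : (X ⨯ A) ⨯ A ⟶ A ⨯ A) (δ A) ≤ β)
        ↔ α ≤ rmap P (prod.lift (𝟙 (X ⨯ A)) prod.snd : X ⨯ A ⟶ (X ⨯ A) ⨯ A) β

/-- A `P`-equivalence relation over `A`. -/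
structure IsEqRel (hE : IsElementary P) {A : C} (ρ : Fib P (A ⨯ A)) : Prop where
  refl : hE.δ A ≤ ρ
  symm : ρ = rmap P (prod.lift prod.snd prod.fst : A ⨯ A ⟶ A ⨯ A) ρ
  trans :
    rmap P (prod.fst : (A ⨯ A) ⨯ A ⟶ A ⨯ A) ρ ⊓
        rmap P (prod.lift (prod.fst ≫ prod.snd) prod.snd : (A ⨯ A) ⨯ A ⟶ A ⨯ A) ρ ≤
      rmap P (prod.lift (prod.fst ≫ prod.fst) prod.snd : (A ⨯ A) ⨯ A ⟶ A ⨯ A) ρ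

/-- An elementary existential doctrine, together with the induced left adjoints
`∃_f` along all arrows, satisfying the adjunction law, Frobenius reciprocity, and
the Beck–Chevalley condition along pullbacks of projections. -/
structure IsExistential extends IsElementary P where
  E : ∀ {A B : C}, (A ⟶ B) → Fib P A → Fib P B
  adjE : ∀ {A B : C} (f : A ⟶ B) (α : Fib P A) (β : Fib P B),
    E f α ≤ β ↔ α ≤ rmap P f β
  frobenius : ∀ {A B : C} (f : A ⟶ B) (α : Fib P A) (β : Fib P B),
    E f (α ⊓ rmap P f β) = E f α ⊓ β
  beckChevalley : ∀ {B A A' : C} (f : A' ⟶ A) (β : Fib P (B ⨯ A)),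
    E (prod.snd : B ⨯ A' ⟶ A') (rmap P (prod.map (𝟙 B) f) β) =
      rmap P f (E (prod.snd : B ⨯ A ⟶ A) β)

/-- Descent data for a relation `ρ` over `A`. -/
def Des {A : C} (ρ : Fib P (A ⨯ A)) : Set (Fib P A) :=
  {α | rmap P (prod.fst : A ⨯ A ⟶ A) α ⊓ ρ ≤ rmap P (prod.snd : A ⨯ A ⟶ A) α}

/-- Comprehensive diagonals: `f = g` iff `⊤ = P⟨f,g⟩(δ)`. -/
def ComprehensiveDiagonals (hE : IsElementary P) : Prop :=
  ∀ {X A : C} (f g : X ⟶ A), f = g ↔ rmap P (prod.lift f g) (hE.δ A) = ⊤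

/-- (Weak) comprehension structure. -/
structure Comprehension where
  cObj : ∀ {A : C}, Fib P A → C
  cArr : ∀ {A : C} (α : Fib P A), cObj α ⟶ A
  cTop : ∀ {A : C} (α : Fib P A), rmap P (cArr α) α = ⊤
  cUniv : ∀ {A : C} (α : Fib P A) {Y : C} (f : Y ⟶ A),
    rmap P f α = ⊤ → ∃ k : Y ⟶ cObj α, k ≫ cArr α = f

/-- Full comprehension. -/
def Comprehension.Full (hC : Comprehension P) : Prop :=
  ∀ {A : C} (α β : Fib P A), α ≤ β ↔ rmap P (hC.cArr α) β = ⊤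

/-- Strong comprehension: comprehension arrows are monic. -/
def Comprehension.Strong (hC : Comprehension P) : Prop :=
  ∀ {A : C} (α : Fib P A), Mono (hC.cArr α)

/-- `P`-injective arrow. -/
def PInj (hE : IsElementary P) {X A : C} (f : X ⟶ A) : Prop :=
  rmap P (prod.map f f) (hE.δ A) = hE.δ X

/-- `P`-surjective arrow. -/
def PSurj (hEx : IsExistential P) {X A : C} (f : X ⟶ A) : Prop :=
  hEx.E f (⊤ : Fib P X) = ⊤

/-- The product relation `ρ ⊠ σ` on `(A ⨯ B) ⨯ (A ⨯ B)`. -/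
def boxprod {A B : C} (ρ : Fib P (A ⨯ A)) (σ : Fib P (B ⨯ B)) :
    Fib P ((A ⨯ B) ⨯ (A ⨯ B)) :=
  rmap P (prod.map prod.fst prod.fst) ρ ⊓ rmap P (prod.map prod.snd prod.snd) σ

/-- A topology on a primary doctrine: a natural family of extensive, idempotent
inf-top-preserving maps commuting with reindexing. -/
structure DocTopology where
  j : ∀ {A : C}, Fib P A → Fib P A
  map_inf : ∀ {A : C} (α β : Fib P A), j (α ⊓ β) = j α ⊓ j β
  map_top : ∀ {A : C}, j (⊤ : Fib P A) = ⊤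
  natural : ∀ {A B : C} (f : A ⟶ B) (β : Fib P B), rmap P f (j β) = j (rmap P f β)
  le_j : ∀ {A : C} (α : Fib P A), α ≤ j α
  idem : ∀ {A : C} (α : Fib P A), j (j α) = j α

/-- An implicational doctrine: each fiber has Heyting implication. -/
structure IsImplicational where
  imp : ∀ {A : C}, Fib P A → Fib P A → Fib P A
  adj : ∀ {A : C} (α β γ : Fib P A), γ ≤ imp α β ↔ γ ⊓ α ≤ β

/-- A universal doctrine: right adjoints to reindexing along projections,
satisfying the Beck–Chevalley condition. -/
structure IsUniversal where
  all : ∀ {B A : C}, Fib P (B ⨯ A) → Fib P A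
  adj : ∀ {B A : C} (γ : Fib P (B ⨯ A)) (β : Fib P A),
    rmap P (prod.snd : B ⨯ A ⟶ A) β ≤ γ ↔ β ≤ all γ
  beckChevalley : ∀ {B A A' : C} (f : A' ⟶ A) (γ : Fib P (B ⨯ A)),
    rmap P f (all γ) = all (rmap P (prod.map (𝟙 B) f) γ)

/-- A disjunctive doctrine: each fiber has finite distributive joins, preserved
by reindexing. -/
structure IsDisjunctive where
  bot : ∀ {A : C}, Fib P A
  sup : ∀ {A : C}, Fib P A → Fib P A → Fib P A
  bot_le : ∀ {A : C} (α : Fib P A), bot ≤ α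
  le_sup_left : ∀ {A : C} (α β : Fib P A), α ≤ sup α β
  le_sup_right : ∀ {A : C} (α β : Fib P A), β ≤ sup α β
  sup_le : ∀ {A : C} (α β γ : Fib P A), α ≤ γ → β ≤ γ → sup α β ≤ γ
  inf_sup_distrib : ∀ {A : C} (α β γ : Fib P A), α ⊓ sup β γ = sup (α ⊓ β) (α ⊓ γ)
  map_bot : ∀ {A B : C} (f : A ⟶ B), rmap P f bot = bot
  map_sup : ∀ {A B : C} (f : A ⟶ B) (β γ : Fib P B),
    rmap P f (sup β γ) = sup (rmap P f β) (rmap P f γ)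

/-!
`δ A` is the least relation that holds on the diagonal. Every arrow `f` preserves `δ`, so
`∃_{f×f} δ ≤ δ`, which gives `≥`. For `≤` it suffices that the join holds on the diagonal of
`A ⨿ B`. Weak comprehension of `∃_inl ⊤ ∨ ∃_inr ⊤` has a section (its restrictions along both
injections are `⊤`), so the injections are jointly `P`-surjective, and on the image of each
injection the diagonal restriction of `∃_{i×i} δ` is `⊤`.
-/

section Reindexing

variable {P}

omit [HasFiniteProducts C] in
lemma rmap_comp {A B D : C} (f : A ⟶ B) (g : B ⟶ D) (x : Fib P D) :
    rmap P (f ≫ g) x = rmap P f (rmap P g x) := by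
  simp only [rmap, op_comp, P.map_comp]
  rfl

omit [HasFiniteProducts C] in
lemma rmap_id {A : C} (x : Fib P A) : rmap P (𝟙 A) x = x := by
  simp only [rmap, op_id, P.map_id]
  rfl

omit [HasFiniteProducts C] in
lemma rmap_mono {A B : C} (f : A ⟶ B) {x y : Fib P B} (h : x ≤ y) :
    rmap P f x ≤ rmap P f y :=
  OrderHomClass.mono (show InfTopHom _ _ from P.map f.op) h

omit [HasFiniteProducts C] in
lemma rmap_top {A B : C} (f : A ⟶ B) : rmap P f (⊤ : Fib P B) = ⊤ :=
  map_top (show InfTopHom _ _ from P.map f.op)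

omit [HasFiniteProducts C] in
lemma rmap_inf {A B : C} (f : A ⟶ B) (x y : Fib P B) :
    rmap P f (x ⊓ y) = rmap P f x ⊓ rmap P f y :=
  map_inf (show InfTopHom _ _ from P.map f.op) x y

end Reindexing

namespace IsElementary

variable {P} (hE : IsElementary P)

lemma rmap_diag_δ (A : C) : rmap P (diag A) (hE.δ A) = ⊤ := by
  have h := rmap_mono (diag A) ((hE.adj A A ⊤ _).mp inf_le_right)
  have e : diag A ≫ prod.lift (𝟙 (A ⨯ A)) prod.snd ≫
      prod.lift (prod.fst ≫ prod.snd) prod.snd = diag A := by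
    ext <;> simp only [Category.assoc, prod.lift_fst, prod.lift_snd, prod.lift_fst_assoc,
      Category.id_comp]
  rw [rmap_top, ← rmap_comp, ← rmap_comp, Category.assoc, e] at h
  exact top_le_iff.mp h

/-- The adjunction at `α = ρ`, `β = ρ(x, z)`, pulled back along `(x, y) ↦ ((x, x), y)`. -/
lemma rmap_fst_rmap_diag_inf_δ_le {A : C} (ρ : Fib P (A ⨯ A)) :
    rmap P prod.fst (rmap P (diag A) ρ) ⊓ hE.δ A ≤ ρ := by
  set p : (A ⨯ A) ⨯ A ⟶ A ⨯ A := prod.lift (prod.fst ≫ prod.fst) prod.snd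
  set m : A ⨯ A ⟶ (A ⨯ A) ⨯ A := prod.lift (prod.lift prod.fst prod.fst) prod.snd
  have h : rmap P prod.fst ρ ⊓ rmap P (prod.lift (prod.fst ≫ prod.snd) prod.snd) (hE.δ A) ≤
      rmap P p ρ := by
    have e : prod.lift (𝟙 (A ⨯ A)) prod.snd ≫ p = 𝟙 _ := by
      ext <;> simp only [Category.assoc, prod.lift_fst, prod.lift_snd, prod.lift_fst_assoc,
        Category.id_comp, p]
    rw [hE.adj, ← rmap_comp, e, rmap_id]
  have e₁ : m ≫ prod.fst = prod.fst ≫ diag A := by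
    ext <;> simp only [Category.assoc, prod.lift_fst, prod.lift_snd, Category.comp_id, m]
  have e₂ : m ≫ prod.lift (prod.fst ≫ prod.snd) prod.snd = 𝟙 _ := by
    ext <;> simp only [Category.assoc, prod.lift_fst, prod.lift_snd, prod.lift_fst_assoc,
      Category.id_comp, m]
  have e₃ : m ≫ p = 𝟙 _ := by
    ext <;> simp only [Category.assoc, prod.lift_fst, prod.lift_snd, prod.lift_fst_assoc,
      Category.id_comp, m, p]
  simpa only [rmap_inf, ← rmap_comp, e₁, e₂, e₃, rmap_id] using rmap_mono m h

theorem δ_le_iff {A : C} (ρ : Fib P (A ⨯ A)) :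
    hE.δ A ≤ ρ ↔ rmap P (diag A) ρ = ⊤ := by
  refine ⟨fun h => top_le_iff.mp ?_, fun h => ?_⟩
  · rw [← hE.rmap_diag_δ A]
    exact rmap_mono _ h
  · simpa [h, rmap_top] using hE.rmap_fst_rmap_diag_inf_δ_le ρ

lemma δ_le_rmap_prodMap_δ {X Y : C} (f : X ⟶ Y) :
    hE.δ X ≤ rmap P (prod.map f f) (hE.δ Y) := by
  rw [hE.δ_le_iff, ← rmap_comp, prod.diag_map, rmap_comp, hE.rmap_diag_δ, rmap_top]

end IsElementary

namespace IsExistential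

variable {P} (hP : IsExistential P)

lemma E_prodMap_δ_le {X Y : C} (f : X ⟶ Y) :
    hP.E (prod.map f f) (hP.δ X) ≤ hP.δ Y :=
  (hP.adjE _ _ _).mpr (hP.δ_le_rmap_prodMap_δ f)

lemma E_top_le_rmap_diag_E_prodMap {X Y : C} (f : X ⟶ Y) {ρ : Fib P (X ⨯ X)}
    (hρ : hP.δ X ≤ ρ) : hP.E f ⊤ ≤ rmap P (diag Y) (hP.E (prod.map f f) ρ) := by
  rw [hP.adjE, ← rmap_comp, ← prod.diag_map, rmap_comp, ← (hP.δ_le_iff ρ).mp hρ]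
  exact rmap_mono _ ((hP.adjE _ _ _).mp le_rfl)

end IsExistential

omit [HasFiniteProducts C] in
lemma Comprehension.eq_top_of_rmap_inl_of_rmap_inr [HasBinaryCoproducts C] {P}
    (hC : Comprehension P) {A B : C} {α : Fib P (A ⨿ B)}
    (hl : rmap P coprod.inl α = ⊤) (hr : rmap P coprod.inr α = ⊤) : α = ⊤ := by
  obtain ⟨kl, hkl⟩ := hC.cUniv α _ hl
  obtain ⟨kr, hkr⟩ := hC.cUniv α _ hr
  have hs : coprod.desc kl kr ≫ hC.cArr α = 𝟙 (A ⨿ B) := by ext <;> simp [hkl, hkr]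
  rw [← rmap_id α, ← hs, rmap_comp, hC.cTop, rmap_top]

lemma sup_E_inl_top_E_inr_top_eq_top [HasBinaryCoproducts C] {P} (hP : IsExistential P)
    (hD : IsDisjunctive P) (hC : Comprehension P) (A B : C) :
    hD.sup (hP.E (coprod.inl : A ⟶ A ⨿ B) ⊤) (hP.E coprod.inr ⊤) = ⊤ :=
  hC.eq_top_of_rmap_inl_of_rmap_inr
    (top_le_iff.mp ((hP.adjE _ _ _).mp (hD.le_sup_left _ _)))
    (top_le_iff.mp ((hP.adjE _ _ _).mp (hD.le_sup_right _ _)))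

theorem coproduct_equality_decomposition
    [HasBinaryCoproducts C]
    (hP : IsExistential P) (hD : IsDisjunctive P)
    (hC : Comprehension P)
    (A B : C) :
    hP.δ (A ⨿ B) =
      hD.sup
        (hP.E (prod.map (coprod.inl : A ⟶ A ⨿ B) (coprod.inl : A ⟶ A ⨿ B)) (hP.δ A))
        (hP.E (prod.map (coprod.inr : B ⟶ A ⨿ B) (coprod.inr : B ⟶ A ⨿ B)) (hP.δ B)) := by
  refine le_antisymm ?_ (hD.sup_le _ _ _ (hP.E_prodMap_δ_le _) (hP.E_prodMap_δ_le _))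
  rw [hP.δ_le_iff, eq_top_iff, ← sup_E_inl_top_E_inr_top_eq_top hP hD hC A B]
  exact hD.sup_le _ _ _
    ((hP.E_top_le_rmap_diag_E_prodMap _ le_rfl).trans (rmap_mono _ (hD.le_sup_left _ _)))
    ((hP.E_top_le_rmap_diag_E_prodMap _ le_rfl).trans (rmap_mono _ (hD.le_sup_right _ _)))

end DoctrinePaper
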